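/- Let 1 ≤ l < k ≤ n and λ ∈ Γ_k. Then for every index 1 ≤ i ≤ n, σ_l(λ)σ_{k−1;i}(λ) − σ_k(λ)σ_{l−1;i}(λ) = σ_{l;i}(λ)σ_{k−1;i}(λ) − σ_{k;i}(λ)σ_{l−1;i}(λ) ≥ (n(k−l)/(k(n−l))) · σ_{l;i}(λ)σ_{k−1;i}(λ). Equivalently, the partial derivative ∂/∂λ_i of the quotient σ_k/σ_l at λ is at least (n(k−l)/(k(n−l))) σ_{l;i}(λ)σ_{k−1;i}(λ)/σ_l(λ)². -/

import Mathlib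

open Finset

/-- The `k`-th elementary symmetric polynomial of `x ∈ ℝⁿ`. -/
noncomputable def esymmR (n k : ℕ) (x : Fin n → ℝ) : ℝ :=
  ∑ s ∈ Finset.univ.powersetCard k, ∏ i ∈ s, x i

/-- The Gårding cone `Γ_k ⊆ ℝⁿ`. -/
def GardingCone (n k : ℕ) : Set (Fin n → ℝ) :=
  {x | ∀ j : ℕ, 1 ≤ j → j ≤ k → 0 < esymmR n j x}

/-!
Expanding `σ_j(λ) = σ_{j;i}(λ) + λ_i σ_{j-1;i}(λ)`, the terms containing `λ_i` cancel, which
is the identity; the inequality becomes `k(n-l) σ_{k;i} σ_{l-1;i} ≤ l(n-k) σ_{l;i} σ_{k-1;i}`.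
This is the Newton–Maclaurin inequality for the `n - 1` numbers `λ_j`, `j ≠ i`: by Newton's
inequalities the means `σ_{t;i}/C(n-1, t)` form a log-concave sequence, and it is positive for
`t < k` because `λ ∈ Γ_k`. Newton's inequalities come from Rolle's theorem: the derivatives of
the real-rooted polynomial `∏ (X + λ_j)` are real-rooted, their three lowest coefficients are
those of `∏ (X + λ_j)` up to factorials, and for a real-rooted polynomial these satisfy
Newton's inequality by an induction on the roots.
-/

open Polynomial

namespace Multiset

section CommSemiring

variable {R : Type*} [CommSemiring R]

theorem esymm_zero (s : Multiset R) : s.esymm 0 = 1 := by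
  simp [esymm]

theorem esymm_eq_zero_of_card_lt {s : Multiset R} {k : ℕ} (h : card s < k) : s.esymm k = 0 := by
  simp [esymm, powersetCard_eq_empty _ h]

theorem esymm_cons_succ (a : R) (s : Multiset R) (k : ℕ) :
    (a ::ₘ s).esymm (k + 1) = s.esymm (k + 1) + a * s.esymm k := by
  simp only [esymm, powersetCard_cons, map_add, sum_add, map_map, Function.comp_def, prod_cons,
    sum_map_mul_left]

theorem esymm_zero_cons (s : Multiset R) (k : ℕ) : (0 ::ₘ s).esymm k = s.esymm k := by
  cases k with
  | zero => simp only [esymm_zero]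
  | succ k => rw [esymm_cons_succ, zero_mul, add_zero]

end CommSemiring

theorem newton_esymm_top {R : Type*} [CommRing R] [LinearOrder R] [IsStrictOrderedRing R] :
    ∀ (d : ℕ) (s : Multiset R), card s = d + 2 →
      2 * ((d : R) + 2) * (s.esymm (d + 2) * s.esymm d) ≤ ((d : R) + 1) * s.esymm (d + 1) ^ 2
  | 0, s, hs => by
    obtain ⟨a, b, rfl⟩ := card_eq_two.1 hs
    simp only [insert_eq_cons, Nat.cast_zero, zero_add, esymm_pair_two, esymm_pair_one, esymm_zero]
    nlinarith [sq_nonneg (a - b)]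
  | d + 1, s, hs => by
    obtain ⟨a, t, rfl, ht⟩ := card_eq_succ_iff.1 hs
    have ih := newton_esymm_top d t ht
    have htop : t.esymm (d + 3) = 0 := esymm_eq_zero_of_card_lt (by omega)
    rw [esymm_cons_succ, esymm_cons_succ, esymm_cons_succ, htop]
    push_cast
    nlinarith [sq_nonneg (((d : R) + 2) * t.esymm (d + 2) - a * t.esymm (d + 1)),
      mul_nonneg (sq_nonneg a) (sub_nonneg.2 ih)]

end Multiset

namespace Polynomial

theorem natDegree_multiset_prod_X_add_C_eq_card {R : Type*} [CommSemiring R] [Nontrivial R]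
    (s : Multiset R) : (s.map (X + C ·)).prod.natDegree = Multiset.card s := by
  rw [natDegree_multiset_prod_of_monic _
    (Multiset.forall_mem_map_iff.2 fun a _ => monic_X_add_C a), Multiset.map_map]
  simp

theorem natDegree_iterate_derivative_eq {R : Type*} [Semiring R] [IsAddTorsionFree R]
    (p : R[X]) (k : ℕ) : (derivative^[k] p).natDegree = p.natDegree - k := by
  induction k with
  | zero => rfl
  | succ k ih => rw [Function.iterate_succ_apply', natDegree_derivative, ih, Nat.sub_sub]

theorem Splits.derivative {p : ℝ[X]} (hp : p.Splits) : (derivative p).Splits := by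
  rw [splits_iff_card_roots] at hp ⊢
  have := card_roots_le_derivative p
  refine le_antisymm (card_roots' _) ?_
  rw [natDegree_derivative]
  omega

theorem Splits.iterate_derivative {p : ℝ[X]} (hp : p.Splits) (k : ℕ) :
    (Polynomial.derivative^[k] p).Splits := by
  induction k with
  | zero => exact hp
  | succ k ih => rw [Function.iterate_succ_apply']; exact ih.derivative

theorem Splits.newton_coeff_zero {q : ℝ[X]} (hq : q.Splits) (h : 2 ≤ q.natDegree) :
    2 * (q.natDegree : ℝ) * (q.coeff 0 * q.coeff 2) ≤
      ((q.natDegree : ℝ) - 1) * q.coeff 1 ^ 2 := by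
  obtain ⟨d, hd⟩ : ∃ d, q.natDegree = d + 2 := ⟨q.natDegree - 2, by omega⟩
  have hcard : Multiset.card q.roots = d + 2 := by rw [← hd, splits_iff_card_roots.1 hq]
  rw [coeff_eq_esymm_roots_of_splits hq (by omega), coeff_eq_esymm_roots_of_splits hq (by omega),
    coeff_eq_esymm_roots_of_splits hq (by omega), hd,
    show d + 2 - 0 = d + 2 by rfl, show d + 2 - 1 = d + 1 by rfl, show d + 2 - 2 = d by rfl]
  set L := q.leadingCoeff
  calc 2 * ((d + 2 : ℕ) : ℝ) * (L * (-1) ^ (d + 2) * q.roots.esymm (d + 2) *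
          (L * (-1) ^ d * q.roots.esymm d))
      = (L * (-1) ^ d) ^ 2 * (2 * ((d : ℝ) + 2) * (q.roots.esymm (d + 2) * q.roots.esymm d)) := by
        push_cast; ring
    _ ≤ (L * (-1) ^ d) ^ 2 * (((d : ℝ) + 1) * q.roots.esymm (d + 1) ^ 2) :=
        mul_le_mul_of_nonneg_left (Multiset.newton_esymm_top d q.roots hcard) (sq_nonneg _)
    _ = (((d + 2 : ℕ) : ℝ) - 1) * (L * (-1) ^ (d + 1) * q.roots.esymm (d + 1)) ^ 2 := by
        push_cast; ring

open Nat in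
theorem Splits.newton_coeff {p : ℝ[X]} (hp : p.Splits) {N : ℕ} (h : N + 2 ≤ p.natDegree) :
    ((p.natDegree : ℝ) - N) * (N + 2) * (p.coeff N * p.coeff (N + 2)) ≤
      ((p.natDegree : ℝ) - N - 1) * (N + 1) * p.coeff (N + 1) ^ 2 := by
  have hq := (hp.iterate_derivative N).newton_coeff_zero
    (by rw [natDegree_iterate_derivative_eq]; omega)
  simp only [natDegree_iterate_derivative_eq, coeff_iterate_derivative, nsmul_eq_mul,
    Nat.cast_sub (show N ≤ p.natDegree by omega), add_zero, add_comm _ N] at hq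
  have d1 : (N + 1).descFactorial N = (N + 1) * N ! := by
    simpa [Nat.add_sub_cancel_left, descFactorial_self] using succ_descFactorial N N
  have d2 : 2 * (N + 2).descFactorial N = (N + 2) * ((N + 1) * N !) := by
    simpa [show N + 1 + 1 - N = 2 by omega, d1] using succ_descFactorial (N + 1) N
  have d2' : 2 * ((N + 2).descFactorial N : ℝ) = (N + 2) * ((N + 1) * N !) := by exact_mod_cast d2
  rw [descFactorial_self, d1] at hq
  push_cast at hq
  refine le_of_mul_le_mul_right ?_ (by positivity : (0 : ℝ) < (N + 1) * (N ! : ℝ) ^ 2)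
  linear_combination hq - ((p.natDegree : ℝ) - N) * N ! * p.coeff N * p.coeff (N + 2) * d2'

end Polynomial

namespace Multiset

theorem newton_esymm (s : Multiset ℝ) (j : ℕ) :
    ((j : ℝ) + 2) * (card s - j) * (s.esymm (j + 2) * s.esymm j) ≤
      ((j : ℝ) + 1) * (card s - j - 1) * s.esymm (j + 1) ^ 2 := by
  rcases lt_or_ge (card s) (j + 2) with hlt | hle
  · rw [esymm_eq_zero_of_card_lt hlt, zero_mul, mul_zero]
    rcases (Nat.lt_succ_iff.1 hlt).lt_or_eq with hlt' | heq
    · rw [esymm_eq_zero_of_card_lt hlt']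
      simp
    · rw [heq]
      simp
  · obtain ⟨N, hN⟩ : ∃ N, card s = N + (j + 2) := ⟨card s - (j + 2), by omega⟩
    have hp : (s.map (X + C ·)).prod.Splits := Splits.multisetProd (by simp [Splits.X_add_C])
    have h := hp.newton_coeff (N := N) (by rw [natDegree_multiset_prod_X_add_C_eq_card]; omega)
    rw [natDegree_multiset_prod_X_add_C_eq_card, prod_X_add_C_coeff s (by omega),
      prod_X_add_C_coeff s (by omega), prod_X_add_C_coeff s (by omega), hN,
      show N + (j + 2) - N = j + 2 by omega, show N + (j + 2) - (N + 1) = j + 1 by omega,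
      show N + (j + 2) - (N + 2) = j by omega] at h
    rw [hN]
    push_cast at h ⊢
    linarith

theorem esymm_mul_esymm_le_sq (s : Multiset ℝ) (j : ℕ) :
    s.esymm (j + 2) * s.esymm j ≤ s.esymm (j + 1) ^ 2 := by
  rcases lt_or_ge (card s) (j + 2) with hlt | hle
  · rw [esymm_eq_zero_of_card_lt hlt, zero_mul]
    positivity
  · have hm : (j : ℝ) + 2 ≤ card s := by exact_mod_cast hle
    have h := newton_esymm s j
    by_contra! hlt
    have hc : (0 : ℝ) ≤ ((j : ℝ) + 1) * (card s - j - 1) := by nlinarith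
    nlinarith [mul_le_mul_of_nonneg_left hlt.le hc, sq_nonneg (s.esymm (j + 1))]

theorem esymm_succ_pos_of_cons {a : ℝ} {s : Multiset ℝ} {j : ℕ} (h0 : 0 < s.esymm j)
    (h1 : 0 < (a ::ₘ s).esymm (j + 1)) (h2 : 0 < (a ::ₘ s).esymm (j + 2)) :
    0 < s.esymm (j + 1) := by
  rw [esymm_cons_succ] at h1 h2
  by_contra! hneg
  have ha : 0 < a := by nlinarith
  have hlt : s.esymm (j + 1) ^ 2 < s.esymm (j + 2) * s.esymm j := by nlinarith
  linarith [esymm_mul_esymm_le_sq s j]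

theorem esymm_pos_of_esymm_cons_pos {a : ℝ} {s : Multiset ℝ} :
    ∀ {k : ℕ}, (∀ j, 1 ≤ j → j ≤ k → 0 < (a ::ₘ s).esymm j) → ∀ j < k, 0 < s.esymm j
  | 0, _, _, hj => absurd hj (Nat.not_lt_zero _)
  | k + 1, h, j, hj => by
    have ih := esymm_pos_of_esymm_cons_pos (k := k) fun t ht1 ht2 => h t ht1 (by omega)
    rcases (Nat.lt_succ_iff.1 hj).lt_or_eq with hjk | rfl
    · exact ih j hjk
    · cases j with
      | zero => simp [esymm_zero]
      | succ j =>
        exact esymm_succ_pos_of_cons (ih j (by omega)) (h _ (by omega) (by omega))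
          (h _ (by omega) (by omega))

/-- The Newton–Maclaurin inequality `P (b + 1) * P a ≤ P b * P (a + 1)` for the means
`P t = s.esymm t / (card s).choose t`, with the binomial coefficients cleared. -/
theorem newton_maclaurin_chain (s : Multiset ℝ) {a b : ℕ} (hab : a ≤ b) (hb : b ≤ card s)
    (hpos : ∀ t, a ≤ t → t ≤ b → 0 < s.esymm t) :
    ((b : ℝ) + 1) * (card s - a) * (s.esymm (b + 1) * s.esymm a) ≤
      ((a : ℝ) + 1) * (card s - b) * (s.esymm b * s.esymm (a + 1)) := by
  induction b, hab using Nat.le_induction with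
  | base => exact le_of_eq (by ring)
  | succ b hab ih =>
    have ih := ih (by omega) fun t ht1 ht2 => hpos t ht1 (by omega)
    have hm : (b : ℝ) + 1 ≤ card s := by exact_mod_cast hb
    have ha : (a : ℝ) ≤ b := by exact_mod_cast hab
    have hEa := hpos a le_rfl (by omega)
    have hEb := hpos b hab (by omega)
    have hEb1 := hpos (b + 1) (by omega) le_rfl
    refine le_of_mul_le_mul_left ?_ (by nlinarith : 0 < ((card s : ℝ) - b) * s.esymm b)
    push_cast
    calc ((card s : ℝ) - b) * s.esymm b *
          (((b : ℝ) + 1 + 1) * (card s - a) * (s.esymm (b + 1 + 1) * s.esymm a))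
        = ((b : ℝ) + 2) * (card s - b) * (s.esymm (b + 2) * s.esymm b) *
          ((card s - a) * s.esymm a) := by ring
      _ ≤ ((b : ℝ) + 1) * (card s - b - 1) * s.esymm (b + 1) ^ 2 * ((card s - a) * s.esymm a) :=
          mul_le_mul_of_nonneg_right (newton_esymm s b) (by nlinarith)
      _ = ((card s : ℝ) - (b + 1)) * s.esymm (b + 1) *
          (((b : ℝ) + 1) * (card s - a) * (s.esymm (b + 1) * s.esymm a)) := by ring
      _ ≤ ((card s : ℝ) - (b + 1)) * s.esymm (b + 1) *
          (((a : ℝ) + 1) * (card s - b) * (s.esymm b * s.esymm (a + 1))) :=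
          mul_le_mul_of_nonneg_left ih (by nlinarith)
      _ = ((card s : ℝ) - b) * s.esymm b *
          (((a : ℝ) + 1) * (card s - (b + 1)) * (s.esymm (b + 1) * s.esymm (a + 1))) := by ring

end Multiset

theorem esymmR_eq_esymm_cons {n : ℕ} (x : Fin n → ℝ) (i : Fin n) (j : ℕ) :
    esymmR n j x = (x i ::ₘ (univ.erase i).val.map x).esymm j := by
  rw [esymmR, ← Finset.esymm_map_val, erase_val, ← Multiset.map_cons,
    Multiset.cons_erase (mem_univ i)]

theorem esymmR_update_zero {n : ℕ} (x : Fin n → ℝ) (i : Fin n) (j : ℕ) :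
    esymmR n j (Function.update x i 0) = ((univ.erase i).val.map x).esymm j := by
  rw [esymmR_eq_esymm_cons, Function.update_self, Multiset.esymm_zero_cons]
  congr 1
  exact Multiset.map_congr rfl fun t ht =>
    Function.update_of_ne (ne_of_mem_erase (s := univ) ht) 0 x

/-- For `1 ≤ l < k ≤ n`, `λ ∈ Γ_k` and each index `i`:
`σ_l(λ)σ_{k-1;i}(λ) - σ_k(λ)σ_{l-1;i}(λ)
  = σ_{l;i}(λ)σ_{k-1;i}(λ) - σ_{k;i}(λ)σ_{l-1;i}(λ)
  ≥ (n(k-l)/(k(n-l))) σ_{l;i}(λ)σ_{k-1;i}(λ)`,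
where `σ_{k;i}` denotes `σ_k` with the `i`-th entry replaced by `0`. -/
theorem esymm_quotient_partial_bound (n k l : ℕ) (hl : 1 ≤ l) (hlk : l < k) (hkn : k ≤ n)
    (x : Fin n → ℝ) (hx : x ∈ GardingCone n k) (i : Fin n) :
    esymmR n l x * esymmR n (k - 1) (Function.update x i 0)
        - esymmR n k x * esymmR n (l - 1) (Function.update x i 0)
      = esymmR n l (Function.update x i 0) * esymmR n (k - 1) (Function.update x i 0)
        - esymmR n k (Function.update x i 0) * esymmR n (l - 1) (Function.update x i 0) ∧
    ((n : ℝ) * ((k : ℝ) - (l : ℝ)) / ((k : ℝ) * ((n : ℝ) - (l : ℝ))))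
        * esymmR n l (Function.update x i 0) * esymmR n (k - 1) (Function.update x i 0)
      ≤ esymmR n l x * esymmR n (k - 1) (Function.update x i 0)
        - esymmR n k x * esymmR n (l - 1) (Function.update x i 0) := by
  obtain ⟨k, rfl⟩ : ∃ k', k = k' + 1 := ⟨k - 1, by omega⟩
  obtain ⟨l, rfl⟩ : ∃ l', l = l' + 1 := ⟨l - 1, by omega⟩
  simp only [esymmR_update_zero, esymmR_eq_esymm_cons x i, Multiset.esymm_cons_succ,
    Nat.add_sub_cancel]
  set r := (univ.erase i).val.map x
  have hcard : Multiset.card r = n - 1 := by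
    rw [Multiset.card_map, ← Finset.card_def, card_erase_of_mem (mem_univ i), card_univ,
      Fintype.card_fin]
  have hpos : ∀ t < k + 1, 0 < r.esymm t := Multiset.esymm_pos_of_esymm_cons_pos
    fun j hj1 hj2 => esymmR_eq_esymm_cons x i j ▸ hx j hj1 hj2
  have hchain := Multiset.newton_maclaurin_chain r (a := l) (b := k) (by omega) (by omega)
    fun t _ ht => hpos t (by omega)
  rw [hcard, Nat.cast_sub (by omega)] at hchain
  refine ⟨by ring, ?_⟩
  have hln : (l : ℝ) + 1 < n := by exact_mod_cast (show l + 1 < n by omega)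
  push_cast at hchain ⊢
  rw [mul_assoc, div_mul_eq_mul_div, div_le_iff₀ (mul_pos (by positivity) (by linarith))]
  linear_combination hchain
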